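/- Suppose Q(z; τ) satisfies ln Q(-z; τ) + ln Q(z; τ) = (2πi/3)(B₃(-A) + B₃(A))τ + 2πi A z - πi A, where A = Im z/Im τ and z = Aτ - Â with Â real. Then with F₊(z; τ) := ln Q(ẑ; τ̂) - τ ln Q(z; τ) and the involution ẑ = z/τ, τ̂ = -1/τ, one has τ F₊(ẑ; τ̂) - F₊(z; τ) = -πi A(2Â + 1)τ. -/
import Mathlib


open Complex

/-- Lemma 4 for F₊: if ln Q satisfies the stated parity relation, then
τ F₊(ẑ;τ̂) - F₊(z;τ) = -πi A (2Ahat + 1) τ. -/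
theorem Fplus_transformation (z τ : ℂ) (hτ : 0 < τ.im)
    (lnQ : ℂ → ℂ → ℂ)
    (A Ahat : ℂ) (hA : A = (z - starRingEnd ℂ z) / (τ - starRingEnd ℂ τ))
    (hAhat : Ahat = (z * starRingEnd ℂ τ - starRingEnd ℂ z * τ) / (τ - starRingEnd ℂ τ))
    (B₃ : ℂ → ℂ) (hB : ∀ t, B₃ t = t ^ 3 - 3 / 2 * t ^ 2 + 1 / 2 * t)
    (hpar : lnQ (-z) τ + lnQ z τ =
      (2 * Real.pi * I / 3) * (B₃ (-A) + B₃ A) * τ + 2 * Real.pi * I * A * z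
        - Real.pi * I * A)
    (Fp : ℂ → ℂ → ℂ)
    (hFp : ∀ w σ, Fp w σ = lnQ (w / σ) (-1 / σ) - σ * lnQ w σ) :
    τ * Fp (z / τ) (-1 / τ) - Fp z τ = -Real.pi * I * A * (2 * Ahat + 1) * τ := by
  have hτ0 : τ ≠ 0 := fun h => by simp [h] at hτ
  have hd : τ - starRingEnd ℂ τ ≠ 0 := by
    intro h
    have h2 : (τ - starRingEnd ℂ τ).im = 0 := by rw [h]; simp
    simp [Complex.sub_im, Complex.conj_im] at h2
    linarith
  have hz : A * τ - Ahat = z := by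
    rw [hA, hAhat]; field_simp; ring
  have hB3 : B₃ (-A) + B₃ A = -3 * A ^ 2 := by rw [hB, hB]; ring
  rw [hFp, hFp]
  have e1 : z / τ / (-1 / τ) = -z := by field_simp
  have e2 : (-1 : ℂ) / (-1 / τ) = τ := by field_simp
  rw [e1, e2]
  have key : τ * (lnQ (-z) τ - -1 / τ * lnQ (z / τ) (-1 / τ)) -
      (lnQ (z / τ) (-1 / τ) - τ * lnQ z τ) = τ * (lnQ (-z) τ + lnQ z τ) := by
    field_simp; ring
  rw [key, hpar, hB3, ← hz]
  ring
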